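/- arXiv:1902.03423 — 3 statements merged into one kernel-verified Lean document; each statement's English description precedes it below -/
import Mathlib

section
/- Let r be odd, e ≥ 2, R = GR(2^e, 2^{er}) a Galois ring, ξ ∈ R of multiplicative order 2^r − 1, and S = G₁ ∪ (−G₁) where G₁ = ⟨ξ⟩. Then the equation x + y + z = 0 has no solution with x, y, z ∈ S. Equivalently, the Cayley graph Cay(R⁺, S) is triangle-free. -/
/-!
Since `2 ^ r - 1` is odd, every power of `ξ` is the square of a power of `ξ`, so a zero-sum triple
from `±⟨ξ⟩` becomes, up to sign, `u² + v² = w²` or `u² + v² + w² = 0` with `u, v, w ∈ ⟨ξ⟩`.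
Put `s = u + v - w`, `σ = (w - u)(w - v)`, resp. `s = u + v + w`, `σ = uv + vw + wu`; then
`s² = 2σ`, and because the maximal ideal is `(2)` and `2 ≠ 0` this forces `s ≡ σ ≡ 0 (mod 2)`.
In the first case `u` or `v` becomes divisible by `2`. In the second, the residues of `u, v, w` are
the roots of `X³ - uvw`, so they have the same cube; as `3 ∤ 2 ^ r - 1` for odd `r` they coincide,
and then `0 = u + v + w ≡ 3u ≡ u (mod 2)`.
-/

open IsLocalRing Ideal

theorem Nat.coprime_three_two_pow_sub_one {r : ℕ} (hr : Odd r) : Nat.Coprime 3 (2 ^ r - 1) := by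
  rw [Nat.Prime.coprime_iff_not_dvd Nat.prime_three]
  obtain ⟨m, rfl⟩ := hr
  have h4 : 4 ^ m % 3 = 1 := by rw [Nat.pow_mod]; norm_num
  rw [show 2 ^ (2 * m + 1) = 2 * 4 ^ m by rw [pow_succ, pow_mul]; ring]
  omega

theorem eq_of_pow_eq_pow_of_coprime {G₀ : Type*} [CommGroupWithZero G₀] {x y : G₀} {m n : ℕ}
    (hmn : m.Coprime n) (hxy : x ^ m = y ^ m) (hx : x ^ n = 1) (hy : y ^ n = 1) : x = y := by
  obtain rfl | hn := eq_or_ne n 0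
  · rw [Nat.coprime_zero_right] at hmn
    simpa [hmn] using hxy
  have hy0 : y ≠ 0 := by
    rintro rfl
    exact zero_ne_one ((zero_pow hn).symm.trans hy)
  rw [← div_eq_one_iff_eq hy0]
  exact (pow_eq_one_iff_of_coprime hmn).mp
    ⟨by rw [div_pow, hxy, div_self (pow_ne_zero _ hy0)], by rw [div_pow, hx, hy, div_one]⟩

theorem exists_pow_eq_one_and_pow_eq_sq {M : Type*} [Monoid M] {ξ : M} {n : ℕ} (hn : Odd n)
    (hξ : ξ ^ n = 1) (k : ℕ) : ∃ u : M, u ^ n = 1 ∧ ξ ^ k = u ^ 2 := by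
  obtain ⟨m, rfl⟩ := hn
  refine ⟨ξ ^ (k * (m + 1)), by rw [← pow_mul, mul_comm, pow_mul, hξ, one_pow], ?_⟩
  rw [← pow_mul, show k * (m + 1) * 2 = (2 * m + 1) * k + k by ring, pow_add, pow_mul, hξ,
    one_pow, one_mul]

theorem SimpleGraph.cliqueFree_three_fromRel_sub {A : Type*} [AddCommGroup A] {P : A → Prop}
    (h : ∀ a b c : A, (P a ∨ P (-a)) → (P b ∨ P (-b)) → (P c ∨ P (-c)) → a + b + c ≠ 0) :
    (SimpleGraph.fromRel fun x y => P (x - y)).CliqueFree 3 := by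
  classical
  intro t ht
  rw [is3Clique_iff] at ht
  obtain ⟨x, y, z, hxy, hxz, hyz, -⟩ := ht
  simp only [fromRel_adj] at hxy hxz hyz
  refine h (x - y) (y - z) (z - x) ?_ ?_ ?_ (by abel)
  · rw [neg_sub]
    exact hxy.2
  · rw [neg_sub]
    exact hyz.2
  · rw [neg_sub]
    exact hxz.2.symm

section LocalRing

variable {R : Type*} [CommRing R]

theorem IsLocalRing.of_forall_not_isUnit_iff_mem [Nontrivial R] (I : Ideal R)
    (h : ∀ x, ¬IsUnit x ↔ x ∈ I) : IsLocalRing R :=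
  of_nonunits_add fun a b ha hb => (h _).mpr (add_mem ((h a).mp ha) ((h b).mp hb))

variable [IsLocalRing R]

theorem IsLocalRing.maximalIdeal_eq_of_forall_not_isUnit_iff_mem (I : Ideal R)
    (h : ∀ x, ¬IsUnit x ↔ x ∈ I) : maximalIdeal R = I :=
  Ideal.ext fun x => by rw [mem_maximalIdeal, mem_nonunits_iff, h]

theorem IsLocalRing.mem_maximalIdeal_of_two_mul_eq_zero (h2 : (2 : R) ≠ 0) {z : R}
    (hz : 2 * z = 0) : z ∈ maximalIdeal R := by
  by_contra hz'
  obtain ⟨u, rfl⟩ := notMem_maximalIdeal.mp hz'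
  exact h2 (by rw [← Units.mul_inv_cancel_right 2 u, hz, zero_mul])

theorem IsLocalRing.mem_maximalIdeal_of_sq_eq_two_mul (hm : maximalIdeal R = span {2})
    (h2 : (2 : R) ≠ 0) {s σ : R} (h : s ^ 2 = 2 * σ) :
    s ∈ maximalIdeal R ∧ σ ∈ maximalIdeal R := by
  have h2m : (2 : R) ∈ maximalIdeal R := hm ▸ mem_span_singleton_self 2
  have hs : s ∈ maximalIdeal R :=
    (maximalIdeal.isMaximal R).isPrime.mem_of_pow_mem 2 (h ▸ mul_mem_right σ _ h2m)
  refine ⟨hs, ?_⟩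
  obtain ⟨d, rfl⟩ := mem_span_singleton.mp (hm ▸ hs)
  have hσ : σ - 2 * d ^ 2 ∈ maximalIdeal R :=
    mem_maximalIdeal_of_two_mul_eq_zero h2 (by linear_combination -h)
  convert add_mem hσ (mul_mem_right (d ^ 2) _ h2m) using 1
  ring

theorem IsLocalRing.sq_add_sq_ne_sq (hm : maximalIdeal R = span {2}) (h2 : (2 : R) ≠ 0)
    {u v w : R} (hu : IsUnit u) (hv : IsUnit v) : u ^ 2 + v ^ 2 ≠ w ^ 2 := by
  intro h
  obtain ⟨hs, hσ⟩ := mem_maximalIdeal_of_sq_eq_two_mul hm h2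
    (s := u + v - w) (σ := (w - u) * (w - v)) (by linear_combination h)
  rcases (maximalIdeal.isMaximal R).isPrime.mem_or_mem hσ with hwu | hwv
  · exact notMem_maximalIdeal.mpr hv (by simpa using add_mem hs hwu)
  · exact notMem_maximalIdeal.mpr hu (by simpa using add_mem hs hwv)

theorem IsLocalRing.residue_pow_three_eq_of_sq_add_sq_add_sq_eq_zero
    (hm : maximalIdeal R = span {2}) (h2 : (2 : R) ≠ 0) {u v w : R}
    (h : u ^ 2 + v ^ 2 + w ^ 2 = 0) : residue R u ^ 3 = residue R v ^ 3 := by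
  obtain ⟨hs, hσ⟩ := mem_maximalIdeal_of_sq_eq_two_mul hm h2
    (s := u + v + w) (σ := u * v + v * w + w * u) (by linear_combination h)
  rw [← map_pow, ← map_pow, ← sub_eq_zero, ← map_sub, residue_eq_zero_iff,
    show u ^ 3 - v ^ 3 = (u - v) * ((u + v + w) * (u + v) - (u * v + v * w + w * u)) by ring]
  exact mul_mem_left _ _ (sub_mem (mul_mem_right _ _ hs) hσ)

theorem IsLocalRing.sq_add_sq_add_sq_ne_zero (hm : maximalIdeal R = span {2})
    (h2 : (2 : R) ≠ 0) {n : ℕ} (hn : Nat.Coprime 3 n) {u v w : R} (hu : u ^ n = 1)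
    (hv : v ^ n = 1) (hw : w ^ n = 1) : u ^ 2 + v ^ 2 + w ^ 2 ≠ 0 := by
  intro h
  have hres : ∀ {x : R}, x ^ n = 1 → residue R x ^ n = 1 := fun hx => by
    rw [← map_pow, hx, map_one]
  have huv : residue R u = residue R v := eq_of_pow_eq_pow_of_coprime hn
    (residue_pow_three_eq_of_sq_add_sq_add_sq_eq_zero hm h2 h) (hres hu) (hres hv)
  have huw : residue R u = residue R w := eq_of_pow_eq_pow_of_coprime hn
    (residue_pow_three_eq_of_sq_add_sq_add_sq_eq_zero hm h2 (w := v) (by linear_combination h))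
    (hres hu) (hres hw)
  have hs : residue R (u + v + w) = 0 := (residue_eq_zero_iff _).mpr
    (mem_maximalIdeal_of_sq_eq_two_mul hm h2 (σ := u * v + v * w + w * u)
      (by linear_combination h)).1
  have h2k : (2 : ResidueField R) = 0 := by
    simpa only [map_ofNat] using (residue_eq_zero_iff (2 : R)).mpr (hm ▸ mem_span_singleton_self 2)
  rw [map_add, map_add, ← huv, ← huw] at hs
  have hu0 : residue R u = 0 := by linear_combination hs - residue R u * h2k
  have hn0 : n ≠ 0 := by
    rintro rfl
    norm_num at hn
  exact notMem_maximalIdeal.mpr (IsUnit.of_pow_eq_one hu hn0) ((residue_eq_zero_iff u).mp hu0)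

theorem IsLocalRing.add_add_ne_zero_of_signed_pow (hm : maximalIdeal R = span {2})
    (h2 : (2 : R) ≠ 0) {n : ℕ} (hn : Odd n) (h3 : Nat.Coprime 3 n) {ξ : R} (hξ : ξ ^ n = 1)
    {x y z : R} (hx : ∃ k : ℕ, x = ξ ^ k ∨ x = -ξ ^ k) (hy : ∃ k : ℕ, y = ξ ^ k ∨ y = -ξ ^ k)
    (hz : ∃ k : ℕ, z = ξ ^ k ∨ z = -ξ ^ k) : x + y + z ≠ 0 := by
  have hsq := exists_pow_eq_one_and_pow_eq_sq hn hξ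
  have hA : ∀ i j k : ℕ, ξ ^ i + ξ ^ j + ξ ^ k ≠ 0 := fun i j k => by
    obtain ⟨u, hu, hi⟩ := hsq i
    obtain ⟨v, hv, hj⟩ := hsq j
    obtain ⟨w, hw, hk⟩ := hsq k
    rw [hi, hj, hk]
    exact sq_add_sq_add_sq_ne_zero hm h2 h3 hu hv hw
  have hB : ∀ i j k : ℕ, ξ ^ i + ξ ^ j ≠ ξ ^ k := fun i j k => by
    obtain ⟨u, hu, hi⟩ := hsq i
    obtain ⟨v, hv, hj⟩ := hsq j
    obtain ⟨w, -, hk⟩ := hsq k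
    rw [hi, hj, hk]
    exact sq_add_sq_ne_sq hm h2 (IsUnit.of_pow_eq_one hu hn.pos.ne')
      (IsUnit.of_pow_eq_one hv hn.pos.ne')
  obtain ⟨i, rfl | rfl⟩ := hx <;> obtain ⟨j, rfl | rfl⟩ := hy <;>
    obtain ⟨k, rfl | rfl⟩ := hz <;> intro hsum
  · exact hA i j k hsum
  · exact hB i j k (by linear_combination hsum)
  · exact hB i k j (by linear_combination hsum)
  · exact hB j k i (by linear_combination -hsum)
  · exact hB j k i (by linear_combination hsum)
  · exact hB i k j (by linear_combination -hsum)
  · exact hB i j k (by linear_combination -hsum)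
  · exact hA i j k (by linear_combination -hsum)

end LocalRing

theorem stmt5_general (e r : ℕ) (he : 2 ≤ e) (hr : Odd r)
    (R : Type) [CommRing R] [CharP R (2 ^ e)]
    (hlocal : ∀ x : R, ¬ IsUnit x ↔ x ∈ Ideal.span {(2 : R)})
    (ξ : R) (hξ : orderOf ξ = 2 ^ r - 1) :
    (∀ x y z : R, (∃ k : ℕ, x = ξ ^ k ∨ x = -ξ ^ k) → (∃ k : ℕ, y = ξ ^ k ∨ y = -ξ ^ k) →
        (∃ k : ℕ, z = ξ ^ k ∨ z = -ξ ^ k) → x + y + z ≠ 0) ∧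
      (SimpleGraph.fromRel fun x y : R => ∃ k : ℕ, x - y = ξ ^ k).CliqueFree 3 := by
  have h2 : (2 : R) ≠ 0 := fun h => by
    have h' : 2 ^ e ∣ 2 ^ 1 := (CharP.cast_eq_zero_iff R (2 ^ e) 2).mp (by exact_mod_cast h)
    have := (Nat.pow_dvd_pow_iff_le_right (by norm_num)).mp h'
    omega
  have : Nontrivial R := nontrivial_of_ne 2 0 h2
  have : IsLocalRing R := .of_forall_not_isUnit_iff_mem _ hlocal
  have hm := maximalIdeal_eq_of_forall_not_isUnit_iff_mem _ hlocal
  have hodd : Odd (2 ^ r - 1) :=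
    Nat.Even.sub_odd Nat.one_le_two_pow (Nat.even_pow.mpr ⟨even_two, hr.pos.ne'⟩) odd_one
  have hpow : ξ ^ (2 ^ r - 1) = 1 := hξ ▸ pow_orderOf_eq_one ξ
  have hsum : ∀ x y z : R, (∃ k : ℕ, x = ξ ^ k ∨ x = -ξ ^ k) →
      (∃ k : ℕ, y = ξ ^ k ∨ y = -ξ ^ k) → (∃ k : ℕ, z = ξ ^ k ∨ z = -ξ ^ k) → x + y + z ≠ 0 :=
    fun _ _ _ => add_add_ne_zero_of_signed_pow hm h2 hodd
      (Nat.coprime_three_two_pow_sub_one hr) hpow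
  have hsigned : ∀ a : R, ((∃ k : ℕ, a = ξ ^ k) ∨ ∃ k : ℕ, -a = ξ ^ k) →
      ∃ k : ℕ, a = ξ ^ k ∨ a = -ξ ^ k := by
    rintro a (⟨k, hk⟩ | ⟨k, hk⟩)
    exacts [⟨k, .inl hk⟩, ⟨k, .inr (neg_eq_iff_eq_neg.mp hk)⟩]
  exact ⟨hsum, SimpleGraph.cliqueFree_three_fromRel_sub fun a b c ha hb hc =>
    hsum a b c (hsigned a ha) (hsigned b hb) (hsigned c hc)⟩

/-- For `r` odd and `e ≥ 2`, in the Galois ring `R = GR(2^e, 2^{er})` with `ξ` of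
multiplicative order `2^r - 1` and `S = G₁ ∪ (-G₁)`, the equation `x + y + z = 0` has
no solution in `S`; equivalently the Cayley graph `Cay(R⁺, S)` is triangle-free. -/
theorem stmt5 (e r : ℕ) (he : 2 ≤ e) (hr : Odd r)
    (R : Type) [CommRing R] [Fintype R] [CharP R (2 ^ e)]
    (hcard : Fintype.card R = 2 ^ (e * r))
    (hlocal : ∀ x : R, ¬ IsUnit x ↔ x ∈ Ideal.span {(2 : R)})
    (ξ : R) (hξ : orderOf ξ = 2 ^ r - 1) :
    (∀ x y z : R, (∃ k : ℕ, x = ξ ^ k ∨ x = -ξ ^ k) → (∃ k : ℕ, y = ξ ^ k ∨ y = -ξ ^ k) →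
        (∃ k : ℕ, z = ξ ^ k ∨ z = -ξ ^ k) → x + y + z ≠ 0) ∧
      (SimpleGraph.fromRel fun x y : R => ∃ k : ℕ, x - y = ξ ^ k).CliqueFree 3 :=
  stmt5_general e r he hr R hlocal ξ hξ
end

section
/- Let R = GR(4, 4^r), G₁ = ⟨ξ⟩ the cyclic group of units of order 2^r − 1, T : R → Z₄ the trace, ω = i, and ζ_γ = Σ_{s∈G₁} ω^{T(γs)}. If γ ∈ 2R with γ ≠ 0 (i.e., γ is a nonzero non-unit), then ζ_γ = −1. -/
/-!
Write `γ = 2δ` and `K = R ⧸ 2R`. Since the annihilator of `2` is `2R`, doubling identifies `K`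
with `2R`, so `|K|² = |R|` and `|K| = 2^r`; as `2^r - 1` is odd, the image `g` of `ξ` still has
order `2^r - 1`, hence generates `Kˣ`. The sum is therefore `∑_{x ∈ Kˣ} ψ(δ x)` for the additive
character `ψ(x mod 2) = i^{T(2x)}` of `K`, which equals `-1` as soon as `ψ` is nontrivial. And `ψ`
is nontrivial, for otherwise `0` and every `g^k` would be roots of the trace polynomial
`∑_{i<r} X^{2^i}`, of degree `2^{r-1} < |K|`.
-/

open Finset Polynomial

theorem Ideal.isMaximal_of_forall_not_isUnit_iff {R : Type*} [CommRing R] {I : Ideal R}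
    (h : ∀ x : R, ¬ IsUnit x ↔ x ∈ I) : I.IsMaximal := by
  rw [Ideal.isMaximal_iff]
  refine ⟨fun h1 => (h 1).2 h1 isUnit_one, fun J x _ hxI hxJ => ?_⟩
  obtain ⟨y, hy⟩ := (not_not.1 (mt (h x).1 hxI)).exists_right_inv
  exact hy ▸ J.mul_mem_right y hxJ

theorem mul_eq_zero_iff_mem_span_singleton {R : Type*} [CommRing R] {a : R}
    (hlocal : ∀ x : R, ¬ IsUnit x ↔ x ∈ Ideal.span {a}) (ha : a ≠ 0) (ha2 : a * a = 0) (x : R) :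
    a * x = 0 ↔ x ∈ Ideal.span {a} := by
  refine ⟨fun hx => (hlocal x).1 fun hu => ha (hu.mul_left_eq_zero.1 hx), fun hx => ?_⟩
  obtain ⟨c, rfl⟩ := Ideal.mem_span_singleton.1 hx
  rw [← mul_assoc, ha2, zero_mul]

theorem card_quotient_span_singleton_sq {R : Type*} [CommRing R] {a : R}
    (h : ∀ x : R, a * x = 0 ↔ x ∈ Ideal.span {a}) :
    Nat.card (R ⧸ Ideal.span {a}) ^ 2 = Nat.card R := by
  let f := LinearMap.mulLeft R a
  have hker : LinearMap.ker f = Ideal.span {a} := by ext x; exact h x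
  have hrange : LinearMap.range f = Ideal.span {a} := by
    ext x; simp [f, Ideal.mem_span_singleton, dvd_def, eq_comm]
  have hiso := Nat.card_congr f.quotKerEquivRange.toEquiv
  rw [hker, hrange] at hiso
  rw [Submodule.card_eq_card_quotient_mul_card (Ideal.span {a}), sq, hiso, mul_comm]

theorem orderOf_quotient_mk_span_two {R : Type*} [CommRing R] (h4 : (4 : R) = 0) {ξ : R}
    (hodd : Odd (orderOf ξ)) :
    orderOf (Ideal.Quotient.mk (Ideal.span {(2 : R)}) ξ) = orderOf ξ := by
  refine Nat.dvd_antisymm (orderOf_map_dvd (Ideal.Quotient.mk _).toMonoidHom ξ) ?_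
  set m := orderOf (Ideal.Quotient.mk (Ideal.span {(2 : R)}) ξ)
  obtain ⟨t, ht⟩ : (2 : R) ∣ ξ ^ m - 1 := by
    rw [← Ideal.mem_span_singleton, ← Ideal.Quotient.eq, map_pow, map_one]
    exact pow_orderOf_eq_one _
  have hsq : ξ ^ (m * 2) = 1 := by
    rw [pow_mul, show ξ ^ m = 1 + 2 * t by linear_combination ht]
    linear_combination (t + t ^ 2) * h4
  exact hodd.coprime_two_right.dvd_of_dvd_mul_right (orderOf_dvd_of_pow_eq_one hsq)

theorem iterate_map_eq_pow_pow {M F : Type*} [Monoid M] [FunLike F M M] [MonoidHomClass F M M]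
    {φ : F} {y : M} {p : ℕ} (h : φ y = y ^ p) (i : ℕ) : φ^[i] y = y ^ p ^ i := by
  induction i with
  | zero => simp
  | succ i ih => rw [Function.iterate_succ_apply', ih, map_pow, h, ← pow_mul, pow_succ']

theorem map_add_of_castHom_eq_sum_iterate {R F : Type*} [CommRing R] {n r : ℕ} [CharP R n]
    [FunLike F R R] [AddHomClass F R R] {φ : F} {T : R → ZMod n}
    (hT : ∀ x, ZMod.castHom (dvd_refl n) R (T x) = ∑ i ∈ range r, φ^[i] x) (a b : R) :
    T (a + b) = T a + T b :=
  ZMod.castHom_injective R <| by simp only [map_add, hT, iterate_map_add, sum_add_distrib]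

theorem Complex.I_pow_val_eq_one_iff (a : ZMod 4) : Complex.I ^ a.val = 1 ↔ a = 0 := by
  rw [Complex.isPrimitiveRoot_I.pow_eq_one_iff_dvd, ← ZMod.natCast_eq_zero_iff, ZMod.natCast_val,
    ZMod.cast_id]

section FiniteField

variable {K : Type*} [Fintype K]

theorem image_range_pow_eq_univ_erase_zero [GroupWithZero K] [DecidableEq K] {g : K}
    (hg : orderOf g = Fintype.card K - 1) :
    (range (Fintype.card K - 1)).image (g ^ ·) = univ.erase 0 := by
  have hpos : 0 < orderOf g := by have := Fintype.one_lt_card (α := K); omega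
  have hg0 : g ≠ 0 := by
    rintro rfl
    exact zero_ne_one ((zero_pow hpos.ne').symm.trans (pow_orderOf_eq_one 0))
  refine eq_of_subset_of_card_le (fun x hx => ?_) ?_
  · obtain ⟨k, -, rfl⟩ := mem_image.1 hx
    exact mem_erase.2 ⟨pow_ne_zero k hg0, mem_univ _⟩
  · rw [card_image_of_injOn (by rw [coe_range, ← hg]; exact pow_injOn_Iio_orderOf), card_range,
      card_erase_of_mem (mem_univ _), card_univ]

theorem AddChar.sum_range_mul_pow_eq_neg_one [Field K] {R' : Type*} [CommRing R'] [IsDomain R']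
    {ψ : AddChar K R'} (hψ : ψ ≠ 1) {d g : K} (hd : d ≠ 0) (hg : orderOf g = Fintype.card K - 1) :
    ∑ k ∈ range (Fintype.card K - 1), ψ (d * g ^ k) = -1 := by
  classical
  simp_rw [← AddChar.mulShift_apply]
  rw [← sum_image (g := (g ^ ·)) (by rw [coe_range, ← hg]; exact pow_injOn_Iio_orderOf),
    image_range_pow_eq_univ_erase_zero hg, sum_erase_eq_sub (mem_univ 0),
    AddChar.sum_eq_zero_of_ne_one (AddChar.IsPrimitive.of_ne_one hψ hd), AddChar.map_zero_eq_one,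
    zero_sub]

theorem exists_sum_pow_pow_ne_zero [Field K] {p r : ℕ} (hp : 1 < p) (hr : 0 < r)
    (hK : p ^ (r - 1) < Fintype.card K) : ∃ x : K, ∑ i ∈ range r, x ^ p ^ i ≠ 0 := by
  let P : K[X] := ∑ i ∈ range r, X ^ p ^ i
  have hP : P ≠ 0 := by
    intro h
    have hcoeff : P.coeff 1 = 1 := by
      simp only [P, finsetSum_coeff, coeff_X_pow]
      rw [sum_eq_single_of_mem 0 (mem_range.2 hr) fun i _ hi => if_neg (Nat.one_lt_pow hi hp).ne]
      simp
    simp [h] at hcoeff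
  have hdeg : P.natDegree ≤ p ^ (r - 1) := natDegree_sum_le_of_forall_le _ _ fun i hi => by
    rw [natDegree_X_pow]; exact Nat.pow_le_pow_right (by omega) (Nat.le_sub_one_of_lt (mem_range.1 hi))
  obtain ⟨x, hx⟩ := exists_eval_ne_zero_of_natDegree_lt_card P hP
    (by rw [Cardinal.mk_fintype]; exact_mod_cast hdeg.trans_lt hK)
  exact ⟨x, by simpa [P, eval_finsetSum] using hx⟩

end FiniteField

theorem exists_sum_iterate_pow_not_mem {R F : Type*} [CommRing R] [FunLike F R R]
    [RingHomClass F R R] {I : Ideal R} [I.IsMaximal] [Fintype (R ⧸ I)] {φ : F} {ξ : R} {p r : ℕ}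
    (hp : 1 < p) (hr : 0 < r) (hφ : φ ξ = ξ ^ p) (hcard : p ^ (r - 1) < Fintype.card (R ⧸ I))
    (hξ : orderOf (Ideal.Quotient.mk I ξ) = Fintype.card (R ⧸ I) - 1) :
    ∃ k, ∑ i ∈ range r, φ^[i] (ξ ^ k) ∉ I := by
  classical
  let := Ideal.Quotient.field I
  obtain ⟨x, hx⟩ := exists_sum_pow_pow_ne_zero hp hr hcard
  have hx0 : x ≠ 0 := by
    rintro rfl
    exact hx (sum_eq_zero fun i _ => zero_pow (pow_ne_zero i (by omega)))
  obtain ⟨k, -, rfl⟩ := mem_image.1 <|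
    (image_range_pow_eq_univ_erase_zero hξ).symm ▸ mem_erase.2 ⟨hx0, mem_univ x⟩
  refine ⟨k, fun hmem => hx ?_⟩
  have hφk : φ (ξ ^ k) = (ξ ^ k) ^ p := by rw [map_pow, hφ, ← pow_mul, ← pow_mul, mul_comm]
  rw [← Ideal.Quotient.eq_zero_iff_mem, map_sum] at hmem
  simpa only [iterate_map_eq_pow_pow hφk, map_pow] using hmem

/-- In `R = GR(4, 4^r)` with `ξ` of order `2^r - 1`, Frobenius `φ`, trace `T : R → Z₄`, and
`ζ_γ = Σ_{s ∈ G₁} i^{T(γ s)}`: if `γ` is a nonzero non-unit (i.e. `γ ∈ 2R`, `γ ≠ 0`),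
then `ζ_γ = -1`. -/
theorem stmt11 (r : ℕ)
    (R : Type) [CommRing R] [Fintype R] [CharP R 4]
    (hcard : Fintype.card R = 4 ^ r)
    (hlocal : ∀ x : R, ¬ IsUnit x ↔ x ∈ Ideal.span {(2 : R)})
    (ξ : R) (hξ : orderOf ξ = 2 ^ r - 1)
    (φ : R ≃+* R) (hφ : φ ξ = ξ ^ 2)
    (T : R → ZMod 4)
    (hT : ∀ x : R, (ZMod.castHom (dvd_refl 4) R) (T x) = ∑ i ∈ Finset.range r, (⇑φ)^[i] x)
    (γ : R) (hγ : γ ∈ Ideal.span {(2 : R)}) (hγ0 : γ ≠ 0) :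
    (∑ k ∈ Finset.range (2 ^ r - 1), Complex.I ^ (T (γ * ξ ^ k)).val) = -1 := by
  classical
  obtain ⟨δ, rfl⟩ := Ideal.mem_span_singleton.1 hγ
  have h4 : (4 : R) = 0 := by exact_mod_cast CharP.cast_eq_zero R 4
  have hann : ∀ x : R, 2 * x = 0 ↔ x ∈ Ideal.span {2} :=
    mul_eq_zero_iff_mem_span_singleton hlocal (fun h => hγ0 (by rw [h, zero_mul]))
      (by linear_combination h4)
  have := Ideal.isMaximal_of_forall_not_isUnit_iff hlocal
  let K := R ⧸ Ideal.span {(2 : R)}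
  let := Ideal.Quotient.field (Ideal.span {(2 : R)})
  let mk : R →+* K := Ideal.Quotient.mk _
  have hK : Fintype.card K = 2 ^ r := by
    refine Nat.pow_left_injective two_ne_zero (?_ : Fintype.card K ^ 2 = (2 ^ r) ^ 2)
    rw [← Nat.card_eq_fintype_card, card_quotient_span_singleton_sq hann,
      Nat.card_eq_fintype_card, hcard, ← pow_mul, mul_comm, pow_mul]
    norm_num
  have hr : 0 < r := Nat.pos_of_ne_zero (Nat.one_lt_two_pow_iff.1 (hK ▸ Fintype.one_lt_card))
  have hg : orderOf (mk ξ) = Fintype.card K - 1 := by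
    rw [orderOf_quotient_mk_span_two h4 (hξ ▸ Nat.Even.sub_odd Nat.one_le_two_pow
      (Nat.even_pow.2 ⟨even_two, hr.ne'⟩) odd_one), hξ, hK]
  let Tr : R →+ ZMod 4 := AddMonoidHom.mk' T (map_add_of_castHom_eq_sum_iterate hT)
  let double : K →+ R := (Submodule.liftQ _ (LinearMap.mulLeft R 2) fun x hx =>
    LinearMap.mem_ker.2 ((hann x).2 hx)).toAddMonoidHom
  let ψ : AddChar K ℂ :=
    ((AddChar.zmodChar 4 Complex.I_pow_four).compAddMonoidHom Tr).compAddMonoidHom double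
  have hψ : ψ ≠ 1 := by
    obtain ⟨k, hk⟩ := exists_sum_iterate_pow_not_mem one_lt_two hr hφ
      (hK ▸ Nat.pow_lt_pow_right one_lt_two (Nat.sub_one_lt hr.ne')) hg
    refine AddChar.ne_one_iff.2 ⟨mk (ξ ^ k), fun h => hk ?_⟩
    have h0 : T (2 * ξ ^ k) = 0 := (Complex.I_pow_val_eq_one_iff _).1 h
    rw [← hT, ← hann, two_mul, ← map_add, ← map_add_of_castHom_eq_sum_iterate hT, ← two_mul, h0,
      map_zero]
  have hδ : mk δ ≠ 0 := fun h => hγ0 ((hann δ).2 (Ideal.Quotient.eq_zero_iff_mem.1 h))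
  calc ∑ k ∈ range (2 ^ r - 1), Complex.I ^ (T (2 * δ * ξ ^ k)).val
      = ∑ k ∈ range (Fintype.card K - 1), ψ (mk δ * mk ξ ^ k) := by
        refine hK ▸ sum_congr rfl fun k _ => ?_
        rw [mul_assoc, ← map_pow, ← map_mul]
        rfl
    _ = -1 := AddChar.sum_range_mul_pow_eq_neg_one hψ hδ hg
end

section
/- Let R = GR(4, 4^r), ξ of multiplicative order 2^r − 1, and G₁ = ⟨ξ⟩. Then for every unit γ ∈ R^*, the cosets γG₁, −γG₁, (1−ξ)γG₁, (1−ξ²)γG₁, …, (1−ξ^{2^r−2})γG₁ partition the unit group R^*, and moreover R \ R^* = 2γG₁ ∪ {0}. -/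
open Pointwise

/-!
Raising to the power `n = 2^r - 1` kills `G₁`, so two cosets `aγG₁` and `bγG₁` can only meet if
`aⁿ = bⁿ`. In characteristic 4, `(1 - u²)^(2^r) = (1 + u^(2^r))² = (1 + u)²` for `u ∈ G₁`, hence
`(1 - u²)ⁿ = (1 + u) / (1 - u)`. An element of `G₁ ∩ (1 + 2R)` squares to `1` and has odd order,
so `2u` determines `u ∈ G₁`; therefore `1`, `-1` and the values `(1 + u) / (1 - u)` for
`u ∈ G₁ \ {1}` are pairwise distinct. As `n` is odd every `ξ^s` is a square `u²` with `u ∈ G₁`,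
so the `2^r` cosets are disjoint. The rest is counting: `x ↦ 2x` maps `R` onto `2R` with kernel
`2R`, so `|R \ R^*| = 2^r` and `|R^*| = 2^r n`.
-/

namespace GaloisRingFour

lemma odd_two_pow_sub_one {r : ℕ} (hr : 1 ≤ r) : Odd (2 ^ r - 1) :=
  Nat.Even.sub_odd Nat.one_le_two_pow ((Nat.even_pow' (by omega)).2 even_two) odd_one

section Monoid

variable {M : Type*} [Monoid M] {r : ℕ} {a x : M}

lemma pow_two_pow_eq_self (hx : x ^ (2 ^ r - 1) = 1) : x ^ 2 ^ r = x := by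
  rw [← Nat.sub_add_cancel Nat.one_le_two_pow, pow_succ, hx, one_mul]

lemma ncard_range_pow (hx : IsOfFinOrder x) :
    (Set.range fun k : ℕ => x ^ k).ncard = orderOf x := by
  rw [← Submonoid.coe_powers, ← Nat.card_coe_set_eq, SetLike.coe_sort_coe,
    ← Nat.card_congr (finEquivPowers hx), Nat.card_eq_fintype_card, Fintype.card_fin]

lemma ncard_smul_range_pow (hx : IsOfFinOrder x)
    (ha : Set.InjOn (a * ·) (Set.range fun k : ℕ => x ^ k)) :
    (a • Set.range fun k : ℕ => x ^ k).ncard = orderOf x := by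
  rw [← Set.image_smul]
  exact ha.ncard_image.trans (ncard_range_pow hx)

end Monoid

variable {R : Type*} [CommRing R]

section CharFour

variable [CharP R 4]

lemma four_eq_zero : (4 : R) = 0 := by
  exact_mod_cast CharP.cast_eq_zero R 4

lemma two_ne_zero_of_charP_four : (2 : R) ≠ 0 := by
  have h := (CharP.cast_eq_zero_iff R 4 2).not.mpr (by norm_num)
  exact_mod_cast h

lemma add_two_mul_sq (a b : R) : (a + 2 * b) ^ 2 = a ^ 2 := by
  linear_combination (a * b + b ^ 2) * four_eq_zero (R := R)

lemma one_sub_sq_pow_two_pow (x : R) (k : ℕ) :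
    (1 - x ^ 2) ^ 2 ^ (k + 1) = (1 + x ^ 2 ^ (k + 1)) ^ 2 := by
  induction k with
  | zero => rw [zero_add, pow_one, show 1 - x ^ 2 = 1 + x ^ 2 + 2 * -x ^ 2 by ring, add_two_mul_sq]
  | succ k ih =>
    set y := x ^ 2 ^ (k + 1)
    rw [pow_succ 2 (k + 1), pow_mul, ih, pow_mul, show (1 + y) ^ 2 = 1 + y ^ 2 + 2 * y by ring,
      add_two_mul_sq]

lemma eq_one_of_two_dvd_sub_one {n : ℕ} (hn : Odd n) {g : R} (hg : g ^ n = 1) (h : 2 ∣ g - 1) :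
    g = 1 := by
  obtain ⟨c, hc⟩ := h
  obtain ⟨m, rfl⟩ := hn
  have hsq : g ^ 2 = 1 := by
    rw [show g = 1 + 2 * c by linear_combination hc, add_two_mul_sq, one_pow]
  rw [← hg, pow_succ, pow_mul, hsq, one_pow, one_mul]

end CharFour

def NonunitsEqSpanTwo (R : Type*) [CommRing R] : Prop :=
  ∀ x : R, ¬ IsUnit x ↔ x ∈ Ideal.span {(2 : R)}

lemma two_dvd_iff_not_isUnit (hlocal : NonunitsEqSpanTwo R) {x : R} : 2 ∣ x ↔ ¬ IsUnit x := by
  rw [hlocal, Ideal.mem_span_singleton]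

section Local

variable [CharP R 4] {n : ℕ} {g h : R}

lemma two_mul_eq_zero_iff (hlocal : NonunitsEqSpanTwo R) {x : R} :
    2 * x = 0 ↔ ¬ IsUnit x := by
  refine ⟨fun h hx => two_ne_zero_of_charP_four (hx.mul_left_eq_zero.1 h), fun h => ?_⟩
  obtain ⟨c, rfl⟩ := (two_dvd_iff_not_isUnit hlocal).2 h
  linear_combination c * four_eq_zero (R := R)

lemma eq_of_two_mul_eq (hlocal : NonunitsEqSpanTwo R) (hn : Odd n) (hg : g ^ n = 1)
    (hh : h ^ n = 1) (h2 : 2 * g = 2 * h) : g = h := by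
  have hsub : 2 ∣ g - h :=
    (two_dvd_iff_not_isUnit hlocal).2 ((two_mul_eq_zero_iff hlocal).1 (by linear_combination h2))
  have hh' : h ^ (n - 1) * h = 1 := by rw [pow_sub_one_mul hn.pos.ne', hh]
  have hw : g * h ^ (n - 1) = 1 := by
    refine eq_one_of_two_dvd_sub_one hn ?_ ?_
    · rw [mul_pow, hg, ← pow_mul, mul_comm (n - 1), pow_mul, hh, one_pow, one_mul]
    · rw [show g * h ^ (n - 1) - 1 = (g - h) * h ^ (n - 1) by linear_combination hh']
      exact hsub.mul_right _
  linear_combination h * hw - g * hh'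

lemma isUnit_one_add (hlocal : NonunitsEqSpanTwo R) (hn : Odd n) (hg : g ^ n = 1)
    (hne : g ≠ 1) : IsUnit (1 + g) := by
  by_contra h
  obtain ⟨c, hc⟩ := (two_dvd_iff_not_isUnit hlocal).2 h
  exact hne (eq_one_of_two_dvd_sub_one hn hg ⟨c - 1, by linear_combination hc⟩)

lemma isUnit_one_sub (hlocal : NonunitsEqSpanTwo R) (hn : Odd n) (hg : g ^ n = 1)
    (hne : g ≠ 1) : IsUnit (1 - g) := by
  by_contra h
  obtain ⟨c, hc⟩ := (two_dvd_iff_not_isUnit hlocal).2 h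
  exact hne (eq_one_of_two_dvd_sub_one hn hg ⟨-c, by linear_combination -hc⟩)

lemma ncard_nonunits [Fintype R] {r : ℕ} (hlocal : NonunitsEqSpanTwo R)
    (hcard : Fintype.card R = 4 ^ r) : {x : R | ¬ IsUnit x}.ncard = 2 ^ r := by
  let f := AddMonoidHom.mulLeft (2 : R)
  have hker : (f.ker : Set R) = {x | ¬ IsUnit x} := by
    ext x
    exact two_mul_eq_zero_iff hlocal
  have hrange : (f.range : Set R) = {x | ¬ IsUnit x} := by
    ext x
    rw [SetLike.mem_coe, AddMonoidHom.mem_range, Set.mem_ofPred_eq,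
      ← two_dvd_iff_not_isUnit hlocal]
    exact ⟨fun ⟨c, hc⟩ => ⟨c, hc.symm⟩, fun ⟨c, hc⟩ => ⟨c, hc.symm⟩⟩
  have h := f.ker.card_mul_index
  rw [AddSubgroup.index_ker, Nat.card_eq_fintype_card (α := R), hcard,
    show (4 : ℕ) ^ r = 2 ^ r * 2 ^ r by rw [← mul_pow]; norm_num,
    ← SetLike.coe_sort_coe, ← SetLike.coe_sort_coe f.range, Nat.card_coe_set_eq,
    Nat.card_coe_set_eq, hker, hrange] at h
  exact Nat.mul_self_inj.1 h

lemma ncard_units [Fintype R] {r : ℕ} (hlocal : NonunitsEqSpanTwo R)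
    (hcard : Fintype.card R = 4 ^ r) : {x : R | IsUnit x}.ncard = 2 ^ r * (2 ^ r - 1) := by
  have h := Set.ncard_add_ncard_compl {x : R | IsUnit x}
  rw [Set.compl_ofPred, ncard_nonunits hlocal hcard, Nat.card_eq_fintype_card, hcard,
    show (4 : ℕ) ^ r = 2 ^ r * 2 ^ r by rw [← mul_pow]; norm_num] at h
  rw [Nat.mul_sub_one]
  omega

end Local

section OneSubSqPow

variable [CharP R 4] {r : ℕ} {u v : R}

lemma one_sub_sq_pow_mul_one_sub (hlocal : NonunitsEqSpanTwo R) (hr : 1 ≤ r)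
    (hu : u ^ (2 ^ r - 1) = 1) (hne : u ≠ 1) :
    (1 - u ^ 2) ^ (2 ^ r - 1) * (1 - u) = 1 + u := by
  obtain ⟨k, rfl⟩ := Nat.exists_eq_add_of_le' hr
  have hfrob : (1 - u ^ 2) ^ 2 ^ (k + 1) = (1 + u) ^ 2 := by
    rw [one_sub_sq_pow_two_pow, pow_two_pow_eq_self hu]
  apply (isUnit_one_add hlocal (odd_two_pow_sub_one hr) hu hne).mul_left_cancel
  calc (1 + u) * ((1 - u ^ 2) ^ (2 ^ (k + 1) - 1) * (1 - u))
      = (1 - u ^ 2) ^ (2 ^ (k + 1) - 1) * (1 - u ^ 2) := by ring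
    _ = (1 + u) * (1 + u) := by rw [pow_sub_one_mul (by positivity), hfrob, sq]

lemma one_sub_sq_pow_ne_one (hlocal : NonunitsEqSpanTwo R) (hr : 1 ≤ r)
    (hu : u ^ (2 ^ r - 1) = 1) (hne : u ≠ 1) : (1 - u ^ 2) ^ (2 ^ r - 1) ≠ 1 := by
  intro h
  have hψ := one_sub_sq_pow_mul_one_sub hlocal hr hu hne
  rw [h, one_mul] at hψ
  exact (two_mul_eq_zero_iff hlocal).1 (by linear_combination -hψ)
    (IsUnit.of_pow_eq_one hu (odd_two_pow_sub_one hr).pos.ne')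

lemma one_sub_sq_pow_ne_neg_one (hlocal : NonunitsEqSpanTwo R) (hr : 1 ≤ r)
    (hu : u ^ (2 ^ r - 1) = 1) (hne : u ≠ 1) : (1 - u ^ 2) ^ (2 ^ r - 1) ≠ -1 := by
  intro h
  have hψ := one_sub_sq_pow_mul_one_sub hlocal hr hu hne
  rw [h] at hψ
  exact two_ne_zero_of_charP_four (by linear_combination -hψ)

lemma eq_of_one_sub_sq_pow_eq (hlocal : NonunitsEqSpanTwo R) (hr : 1 ≤ r)
    (hu : u ^ (2 ^ r - 1) = 1) (hv : v ^ (2 ^ r - 1) = 1) (hune : u ≠ 1) (hvne : v ≠ 1)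
    (h : (1 - u ^ 2) ^ (2 ^ r - 1) = (1 - v ^ 2) ^ (2 ^ r - 1)) : u = v := by
  have hψu := one_sub_sq_pow_mul_one_sub hlocal hr hu hune
  have hψv := one_sub_sq_pow_mul_one_sub hlocal hr hv hvne
  exact eq_of_two_mul_eq hlocal (odd_two_pow_sub_one hr) hu hv
    (by linear_combination (v - 1) * hψu + (1 - u) * hψv + (1 - u) * (1 - v) * h)

end OneSubSqPow

def cosetRep (ξ : R) (t : ℕ) : R :=
  if t = 0 then 1 else if t = 1 then -1 else 1 - ξ ^ (t - 1)

section Cosets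

variable {r : ℕ} {ξ : R}

lemma cosetRep_mul (ξ γ : R) (t : ℕ) :
    cosetRep ξ t * γ = if t = 0 then γ else if t = 1 then -γ else (1 - ξ ^ (t - 1)) * γ := by
  unfold cosetRep
  split_ifs <;> ring

lemma cosetRep_of_two_le {t : ℕ} (ht : 2 ≤ t) : cosetRep ξ t = 1 - ξ ^ (t - 1) := by
  rw [cosetRep, if_neg (by omega), if_neg (by omega)]

lemma pow_orderOf_pow_eq_one (hξ : orderOf ξ = 2 ^ r - 1) (k : ℕ) :
    (ξ ^ k) ^ (2 ^ r - 1) = 1 := by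
  rw [← pow_mul, mul_comm, pow_mul, ← hξ, pow_orderOf_eq_one, one_pow]

lemma exists_cosetRep_eq_one_sub_sq (hr : 1 ≤ r) (hξ : orderOf ξ = 2 ^ r - 1) {t : ℕ}
    (ht : 2 ≤ t) (ht' : t < 2 ^ r) :
    ∃ u : R, u ^ (2 ^ r - 1) = 1 ∧ u ≠ 1 ∧ cosetRep ξ t = 1 - u ^ 2 := by
  have hsq : (ξ ^ ((t - 1) * 2 ^ (r - 1))) ^ 2 = ξ ^ (t - 1) := by
    rw [← pow_mul, mul_assoc, ← pow_succ, Nat.sub_add_cancel hr, pow_mul,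
      pow_two_pow_eq_self (pow_orderOf_pow_eq_one hξ _)]
  refine ⟨ξ ^ ((t - 1) * 2 ^ (r - 1)), pow_orderOf_pow_eq_one hξ _, ?_,
    by rw [hsq, cosetRep_of_two_le ht]⟩
  intro h1
  rw [h1, one_pow, eq_comm] at hsq
  exact pow_ne_one_of_lt_orderOf (by omega) (by omega) hsq

variable [CharP R 4]

lemma isUnit_cosetRep (hlocal : NonunitsEqSpanTwo R) (hr : 1 ≤ r) (hξ : orderOf ξ = 2 ^ r - 1)
    {t : ℕ} (ht : t < 2 ^ r) : IsUnit (cosetRep ξ t) := by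
  rcases (by omega : t = 0 ∨ t = 1 ∨ 2 ≤ t) with rfl | rfl | ht2
  · simp [cosetRep]
  · simp [cosetRep]
  rw [cosetRep_of_two_le ht2]
  exact isUnit_one_sub hlocal (odd_two_pow_sub_one hr) (pow_orderOf_pow_eq_one hξ _)
    (pow_ne_one_of_lt_orderOf (by omega) (by omega))

lemma cosetRep_pow_ne_of_lt (hlocal : NonunitsEqSpanTwo R) (hr : 1 ≤ r)
    (hξ : orderOf ξ = 2 ^ r - 1) {s t : ℕ} (hst : s < t) (ht : t < 2 ^ r) :
    cosetRep ξ s ^ (2 ^ r - 1) ≠ cosetRep ξ t ^ (2 ^ r - 1) := by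
  have hneg : (-1 : R) ^ (2 ^ r - 1) = -1 := (odd_two_pow_sub_one hr).neg_one_pow
  intro h
  rcases Nat.lt_or_ge t 2 with ht2 | ht2
  · obtain ⟨rfl, rfl⟩ : s = 0 ∧ t = 1 := by omega
    simp only [cosetRep, one_pow, hneg, if_true, if_neg one_ne_zero] at h
    exact two_ne_zero_of_charP_four (by linear_combination h)
  obtain ⟨v, hv, hvne, hvt⟩ := exists_cosetRep_eq_one_sub_sq hr hξ ht2 ht
  rw [hvt] at h
  rcases (by omega : s = 0 ∨ s = 1 ∨ 2 ≤ s) with rfl | rfl | hs2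
  · exact one_sub_sq_pow_ne_one hlocal hr hv hvne (by simpa [cosetRep] using h.symm)
  · exact one_sub_sq_pow_ne_neg_one hlocal hr hv hvne (by simpa [cosetRep, hneg] using h.symm)
  obtain ⟨u, hu, hune, hus⟩ := exists_cosetRep_eq_one_sub_sq hr hξ hs2 (hst.trans ht)
  rw [hus] at h
  have huv := eq_of_one_sub_sq_pow_eq hlocal hr hu hv hune hvne h
  have hpow : ξ ^ (s - 1) = ξ ^ (t - 1) := by
    rw [← sub_right_inj (a := (1 : R)), ← cosetRep_of_two_le hs2, ← cosetRep_of_two_le ht2,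
      hus, hvt, huv]
  have := pow_injOn_Iio_orderOf (x := ξ) (by simp only [Set.mem_Iio, hξ]; omega)
    (by simp only [Set.mem_Iio, hξ]; omega) hpow
  omega

lemma disjoint_cosetRep_smul (hlocal : NonunitsEqSpanTwo R) (hr : 1 ≤ r)
    (hξ : orderOf ξ = 2 ^ r - 1) {s t : ℕ} (hs : s < 2 ^ r) (ht : t < 2 ^ r) (hst : s ≠ t)
    {γ : R} (hγ : IsUnit γ) :
    Disjoint ((cosetRep ξ s * γ) • Set.range fun k : ℕ => ξ ^ k)
      ((cosetRep ξ t * γ) • Set.range fun k : ℕ => ξ ^ k) := by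
  rw [Set.disjoint_left]
  rintro _ ⟨_, ⟨a, rfl⟩, rfl⟩ ⟨_, ⟨b, rfl⟩, h⟩
  have hpow := congrArg (· ^ (2 ^ r - 1)) h
  simp only [smul_eq_mul, mul_pow, pow_orderOf_pow_eq_one hξ, mul_one] at hpow
  have hrep := (hγ.pow _).mul_right_cancel hpow
  rcases Nat.lt_or_gt_of_ne hst with hlt | hlt
  · exact cosetRep_pow_ne_of_lt hlocal hr hξ hlt ht hrep.symm
  · exact cosetRep_pow_ne_of_lt hlocal hr hξ hlt hs hrep

lemma biUnion_cosetRep_smul_eq_units [Fintype R] (hlocal : NonunitsEqSpanTwo R)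
    (hcard : Fintype.card R = 4 ^ r) (hr : 1 ≤ r) (hξ : orderOf ξ = 2 ^ r - 1) {γ : R}
    (hγ : IsUnit γ) :
    ⋃ t ∈ Finset.range (2 ^ r), (cosetRep ξ t * γ) • (Set.range fun k : ℕ => ξ ^ k) =
      {x | IsUnit x} := by
  have hfin : IsOfFinOrder ξ := orderOf_pos_iff.1 (hξ ▸ (odd_two_pow_sub_one hr).pos)
  have hunit {t : ℕ} (ht : t ∈ Finset.range (2 ^ r)) : IsUnit (cosetRep ξ t * γ) :=
    (isUnit_cosetRep hlocal hr hξ (Finset.mem_range.1 ht)).mul hγ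
  refine Set.eq_of_subset_of_ncard_le ?_ ?_ (Set.toFinite _)
  · simp only [Set.iUnion_subset_iff]
    rintro t ht _ ⟨_, ⟨k, rfl⟩, rfl⟩
    exact (hunit ht).mul (hfin.isUnit.pow k)
  rw [ncard_units hlocal hcard, ← Finset.set_biUnion_coe, Set.Finite.ncard_biUnion
      (Finset.finite_toSet _) (fun _ _ => Set.toFinite _)
      (fun s hs t ht hst => disjoint_cosetRep_smul hlocal hr hξ (Finset.mem_range.1 hs)
        (Finset.mem_range.1 ht) hst hγ),
    finsum_mem_coe_finset, Finset.sum_congr rfl fun t ht =>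
      ncard_smul_range_pow hfin (hunit ht).mul_right_injective.injOn,
    Finset.sum_const, Finset.card_range, smul_eq_mul, hξ]

lemma nonunits_eq_two_mul_smul_union_zero [Fintype R] (hlocal : NonunitsEqSpanTwo R)
    (hcard : Fintype.card R = 4 ^ r) (hr : 1 ≤ r) (hξ : orderOf ξ = 2 ^ r - 1) {γ : R}
    (hγ : IsUnit γ) :
    {x : R | ¬ IsUnit x} = (2 * γ) • (Set.range fun k : ℕ => ξ ^ k) ∪ {0} := by
  have hfin : IsOfFinOrder ξ := orderOf_pos_iff.1 (hξ ▸ (odd_two_pow_sub_one hr).pos)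
  have hinj : Set.InjOn (2 * γ * ·) (Set.range fun k : ℕ => ξ ^ k) := by
    rintro _ ⟨a, rfl⟩ _ ⟨b, rfl⟩ h
    exact eq_of_two_mul_eq hlocal (odd_two_pow_sub_one hr) (pow_orderOf_pow_eq_one hξ a)
      (pow_orderOf_pow_eq_one hξ b) (hγ.mul_left_cancel (by linear_combination h))
  have h0 : (0 : R) ∉ (2 * γ) • Set.range fun k : ℕ => ξ ^ k := by
    rintro ⟨_, ⟨k, rfl⟩, h⟩
    exact (two_mul_eq_zero_iff hlocal).1 (by linear_combination h) (hγ.mul (hfin.isUnit.pow k))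
  symm
  refine Set.eq_of_subset_of_ncard_le ?_ ?_ (Set.toFinite _)
  · rintro _ (⟨_, ⟨k, rfl⟩, rfl⟩ | rfl) <;> refine (two_dvd_iff_not_isUnit hlocal).1 ?_
    · exact (dvd_mul_right 2 γ).mul_right _
    · exact dvd_zero 2
  rw [ncard_nonunits hlocal hcard, Set.ncard_union_eq (Set.disjoint_singleton_right.2 h0),
    Set.ncard_singleton, ncard_smul_range_pow hfin hinj, hξ, Nat.sub_add_cancel Nat.one_le_two_pow]

end Cosets

end GaloisRingFour

open GaloisRingFour

/-- In `R = GR(4, 4^r)` with `ξ` of multiplicative order `2^r - 1` and `G₁ = ⟨ξ⟩`, for every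
unit `γ` the `2^r` cosets `γG₁, -γG₁, (1-ξ)γG₁, (1-ξ²)γG₁, …, (1-ξ^{2^r-2})γG₁` are pairwise
disjoint and partition the unit group `R^*`; moreover `R \ R^* = 2γG₁ ∪ {0}`. -/
theorem stmt19 (r : ℕ) (hr : 1 ≤ r)
    (R : Type) [CommRing R] [Fintype R] [CharP R 4]
    (hcard : Fintype.card R = 4 ^ r)
    (hlocal : ∀ x : R, ¬ IsUnit x ↔ x ∈ Ideal.span {(2 : R)})
    (ξ : R) (hξ : orderOf ξ = 2 ^ r - 1) :
    (∀ t₁ ∈ Finset.range (2 ^ r), ∀ t₂ ∈ Finset.range (2 ^ r), t₁ ≠ t₂ → ∀ γ : R, IsUnit γ →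
      Disjoint
        ((if t₁ = 0 then γ else if t₁ = 1 then -γ else (1 - ξ ^ (t₁ - 1)) * γ) •
          (Set.range fun k : ℕ => ξ ^ k))
        ((if t₂ = 0 then γ else if t₂ = 1 then -γ else (1 - ξ ^ (t₂ - 1)) * γ) •
          (Set.range fun k : ℕ => ξ ^ k))) ∧
    (∀ γ : R, IsUnit γ →
      (⋃ t ∈ Finset.range (2 ^ r),
          (if t = 0 then γ else if t = 1 then -γ else (1 - ξ ^ (t - 1)) * γ) •
            (Set.range fun k : ℕ => ξ ^ k))
        = {x : R | IsUnit x}) ∧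
    (∀ γ : R, IsUnit γ →
      {x : R | ¬ IsUnit x} = (2 * γ) • (Set.range fun k : ℕ => ξ ^ k) ∪ {0}) := by
  simp only [← cosetRep_mul]
  refine ⟨fun s hs t ht hst γ hγ => ?_, fun γ hγ => ?_, fun γ hγ => ?_⟩
  · exact disjoint_cosetRep_smul hlocal hr hξ (Finset.mem_range.1 hs) (Finset.mem_range.1 ht)
      hst hγ
  · exact biUnion_cosetRep_smul_eq_units hlocal hcard hr hξ hγ
  · exact nonunits_eq_two_mul_smul_union_zero hlocal hcard hr hξ hγ
end
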